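/- arXiv:2401.14811 — 7 statements merged into one kernel-verified Lean document; each statement's English description precedes it below -/
import Mathlib

section
/- Let γ ∈ [1/2, 1), let T be a finite nonempty set (of 'transitions'), and define m : T^ℕ → (T → ℝ) by m(ξ)(t) = ∑_{j=0}^∞ γ^j · [ξ_j = t]. Then for any two elements t_i, t_j ∈ T and any λ ∈ [0,1], the point λ · m(t_i^ω) + (1-λ) · m(t_j^ω) lies in the image of m, where t^ω denotes the constant sequence at t. -/
/-!
Greedy base-`γ` expansion: for `1/2 ≤ γ < 1`, every `x ∈ [0, 1/(1-γ)]` is `∑_{n ∈ A} γ^n` for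
some `A ⊆ ℕ`; one takes `γ^n` whenever it still fits under `x`. The remainder then stays in
`[0, γ^n/(1-γ)]`, since a skipped `γ^n` exceeds the remainder and `γ^n ≤ γ^(n+1)/(1-γ)` exactly
when `γ ≥ 1/2`. Visiting `t_i` at the times in `A` and `t_j` otherwise realizes the convex
combination with `x = λ/(1-γ)`.
-/

open Filter Topology

noncomputable def greedyPartialSum (γ x : ℝ) : ℕ → ℝ
  | 0 => 0
  | n + 1 =>
    if greedyPartialSum γ x n + γ ^ n ≤ x then greedyPartialSum γ x n + γ ^ n
    else greedyPartialSum γ x n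

def greedyDigits (γ x : ℝ) : Set ℕ := {n | greedyPartialSum γ x n + γ ^ n ≤ x}

section GreedyExpansion

variable {γ x : ℝ}

theorem greedyPartialSum_succ (n : ℕ) :
    greedyPartialSum γ x (n + 1) =
      greedyPartialSum γ x n + (greedyDigits γ x).indicator (γ ^ ·) n := by
  by_cases h : n ∈ greedyDigits γ x
  · rw [Set.indicator_of_mem h, greedyPartialSum]
    exact if_pos h
  · rw [Set.indicator_of_notMem h, greedyPartialSum, add_zero]
    exact if_neg h

theorem sum_range_indicator_greedyDigits (n : ℕ) :
    ∑ k ∈ Finset.range n, (greedyDigits γ x).indicator (γ ^ ·) k = greedyPartialSum γ x n := by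
  induction n with
  | zero => rfl
  | succ n ih => rw [Finset.sum_range_succ, ih, greedyPartialSum_succ]

theorem greedyPartialSum_remainder_mem_Icc (hγ : 1 / 2 ≤ γ) (hγ1 : γ < 1) (hx0 : 0 ≤ x)
    (hx : x ≤ (1 - γ)⁻¹) (n : ℕ) :
    x - greedyPartialSum γ x n ∈ Set.Icc 0 (γ ^ n * (1 - γ)⁻¹) := by
  have h1γ : 0 < 1 - γ := by linarith
  induction n with
  | zero => simpa [greedyPartialSum] using ⟨hx0, hx⟩
  | succ n ih =>
    obtain ⟨ih0, ih1⟩ := ih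
    have hpow : γ ^ (n + 1) * (1 - γ)⁻¹ = γ ^ n * (1 - γ)⁻¹ - γ ^ n := by
      field_simp; ring
    have hskip : γ ^ n ≤ γ ^ (n + 1) * (1 - γ)⁻¹ := by
      rw [hpow, le_sub_iff_add_le, ← two_mul, ← div_eq_mul_inv, le_div_iff₀ h1γ]
      nlinarith [pow_nonneg (show 0 ≤ γ by linarith) n]
    rw [greedyPartialSum]
    split_ifs with h
    · constructor <;> linarith
    · constructor <;> linarith

theorem tendsto_greedyPartialSum (hγ : 1 / 2 ≤ γ) (hγ1 : γ < 1) (hx0 : 0 ≤ x)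
    (hx : x ≤ (1 - γ)⁻¹) : Tendsto (greedyPartialSum γ x) atTop (𝓝 x) := by
  have hbound : Tendsto (fun n : ℕ => x - γ ^ n * (1 - γ)⁻¹) atTop (𝓝 x) := by
    simpa using ((tendsto_pow_atTop_nhds_zero_of_lt_one (by linarith) hγ1).mul_const
      (1 - γ)⁻¹).const_sub x
  refine tendsto_of_tendsto_of_tendsto_of_le_of_le hbound tendsto_const_nhds (fun n => ?_)
    (fun n => ?_) <;>
  · have := greedyPartialSum_remainder_mem_Icc hγ hγ1 hx0 hx n
    simp only [Set.mem_Icc] at this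
    linarith

theorem hasSum_indicator_greedyDigits (hγ : 1 / 2 ≤ γ) (hγ1 : γ < 1) (hx0 : 0 ≤ x)
    (hx : x ≤ (1 - γ)⁻¹) : HasSum ((greedyDigits γ x).indicator (γ ^ ·)) x := by
  rw [hasSum_iff_tendsto_nat_of_nonneg
    (fun n => Set.indicator_nonneg (fun n _ => pow_nonneg (by linarith) n) n)]
  simpa only [sum_range_indicator_greedyDigits] using tendsto_greedyPartialSum hγ hγ1 hx0 hx

theorem exists_hasSum_indicator_pow (hγ : 1 / 2 ≤ γ) (hγ1 : γ < 1) (hx0 : 0 ≤ x)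
    (hx : x ≤ (1 - γ)⁻¹) : ∃ A : Set ℕ, HasSum (A.indicator (γ ^ ·)) x :=
  ⟨_, hasSum_indicator_greedyDigits hγ hγ1 hx0 hx⟩

end GreedyExpansion

section Occupancy

universe u

variable {γ : ℝ} {T : Type u} [DecidableEq T]

theorem hasSum_occupancy_const (hγ0 : 0 ≤ γ) (hγ1 : γ < 1) (s t : T) :
    HasSum (fun j : ℕ => γ ^ j * if s = t then (1 : ℝ) else 0)
      (if s = t then (1 - γ)⁻¹ else 0) := by
  split_ifs
  · simpa using hasSum_geometric_of_lt_one hγ0 hγ1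
  · simp

theorem hasSum_occupancy_piecewise (hγ0 : 0 ≤ γ) (hγ1 : γ < 1) {A : Set ℕ}
    [DecidablePred (· ∈ A)] {x : ℝ} (hA : HasSum (A.indicator (γ ^ ·)) x) (s u t : T) :
    HasSum (fun j => γ ^ j * if A.piecewise (fun _ => s) (fun _ => u) j = t then (1 : ℝ) else 0)
      ((if s = t then 1 else 0) * x + (if u = t then 1 else 0) * ((1 - γ)⁻¹ - x)) := by
  have hAc : HasSum (Aᶜ.indicator (γ ^ ·)) ((1 - γ)⁻¹ - x) := by
    rw [Set.indicator_compl]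
    exact (hasSum_geometric_of_lt_one hγ0 hγ1).sub hA
  refine ((hA.mul_left _).add (hAc.mul_left _)).congr_fun fun j => ?_
  by_cases hj : j ∈ A <;> simp [hj]

end Occupancy

theorem stmt_1_general (γ : ℝ) (hγ : 1/2 ≤ γ) (hγ1 : γ < 1)
    (T : Type*) [DecidableEq T]
    (m : (ℕ → T) → T → ℝ)
    (hm : ∀ ξ t, m ξ t = ∑' j : ℕ, γ^j * (if ξ j = t then (1:ℝ) else 0))
    (ti tj : T) (lam : ℝ) (h0 : 0 ≤ lam) (h1 : lam ≤ 1) :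
    ∃ ξ : ℕ → T, m ξ = fun t => lam * m (fun _ => ti) t + (1 - lam) * m (fun _ => tj) t := by
  classical
  have hγ0 : 0 ≤ γ := by linarith
  have hinv : 0 ≤ (1 - γ)⁻¹ := inv_nonneg.mpr (by linarith)
  obtain ⟨A, hA⟩ := exists_hasSum_indicator_pow (x := lam * (1 - γ)⁻¹) hγ hγ1
    (mul_nonneg h0 hinv) (mul_le_of_le_one_left hinv h1)
  refine ⟨A.piecewise (fun _ => ti) (fun _ => tj), funext fun t => ?_⟩
  simp only [hm, (hasSum_occupancy_piecewise hγ0 hγ1 hA ti tj t).tsum_eq,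
    (hasSum_occupancy_const hγ0 hγ1 _ t).tsum_eq]
  split_ifs <;> ring

/-- Segments between vertex occupancy vectors are realized: for γ ∈ [1/2,1) and
`m ξ t = ∑' j, γ^j · [ξ j = t]`, every convex combination of `m` of two constant
sequences is in the image of `m`. -/
theorem stmt_1 (γ : ℝ) (hγ : 1/2 ≤ γ) (hγ1 : γ < 1)
    (T : Type*) [Fintype T] [Nonempty T] [DecidableEq T]
    (m : (ℕ → T) → T → ℝ)
    (hm : ∀ ξ t, m ξ t = ∑' j : ℕ, γ^j * (if ξ j = t then (1:ℝ) else 0))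
    (ti tj : T) (lam : ℝ) (h0 : 0 ≤ lam) (h1 : lam ≤ 1) :
    ∃ ξ : ℕ → T, m ξ = fun t => lam * m (fun _ => ti) t + (1 - lam) * m (fun _ => tj) t :=
  stmt_1_general γ hγ hγ1 T m hm ti tj lam h0 h1
end

section
/- Let γ ∈ [1/2, 1), let T be a finite set with |T| = n, and define m : T^ℕ → (T → ℝ) by m(ξ)(t) = ∑_{j=0}^∞ γ^j · [ξ_j = t]. Then the image of m is contained in the simplex {x : T → ℝ | ∀t, x(t) ≥ 0 and ∑_t x(t) = 1/(1-γ)}, and the image contains all edges (1-faces) of this simplex. -/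
/-!
A point `a • v tᵢ + b • v tⱼ` of an edge is `m ξ` for the sequence `ξ` that visits `tᵢ` on a
set `S ⊆ ℕ` and `tⱼ` off it, provided `∑_{n ∈ S} γⁿ = a / (1 - γ)`. Such an `S` exists by
Kakeya's greedy argument: since `γ ≥ 1/2`, each term `γⁿ` is at most the tail `∑_{k > n} γᵏ`, so
taking `n` into `S` whenever this does not overshoot the target never gets stuck below it.
-/

open Filter Topology Finset

section GreedySubsum

variable {a : ℕ → ℝ} {c : ℝ}

noncomputable def greedySubsum (a : ℕ → ℝ) (c : ℝ) : ℕ → ℝ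
  | 0 => 0
  | n + 1 => greedySubsum a c n + if greedySubsum a c n + a n ≤ c then a n else 0

def greedySet (a : ℕ → ℝ) (c : ℝ) : Set ℕ := {n | greedySubsum a c n + a n ≤ c}

lemma sum_range_indicator_greedySet (n : ℕ) :
    ∑ k ∈ range n, (greedySet a c).indicator a k = greedySubsum a c n := by
  induction n with
  | zero => simp [greedySubsum]
  | succ n ih =>
    classical
    rw [sum_range_succ, ih, greedySubsum, Set.indicator_apply]
    rfl

lemma greedySubsum_le (hc : 0 ≤ c) (n : ℕ) : greedySubsum a c n ≤ c := by
  induction n with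
  | zero => exact hc
  | succ n ih =>
    rw [greedySubsum]
    split_ifs <;> linarith

lemma le_greedySubsum_add_tsum (ha : Summable a) (hdom : ∀ n, a n ≤ ∑' k, a (k + (n + 1)))
    (hc : c ≤ ∑' k, a k) (n : ℕ) : c ≤ greedySubsum a c n + ∑' k, a (k + n) := by
  induction n with
  | zero => simpa [greedySubsum] using hc
  | succ n ih =>
    have htail : ∑' k, a (k + n) = a n + ∑' k, a (k + (n + 1)) := by
      rw [((summable_nat_add_iff n).mpr ha).tsum_eq_zero_add]
      simp only [zero_add, add_right_comm _ 1 n, add_assoc]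
    rw [greedySubsum]
    split_ifs with h <;> linarith [hdom n]

theorem hasSum_indicator_greedySet (ha0 : 0 ≤ a) (ha : Summable a)
    (hdom : ∀ n, a n ≤ ∑' k, a (k + (n + 1))) (hc0 : 0 ≤ c) (hc : c ≤ ∑' k, a k) :
    HasSum ((greedySet a c).indicator a) c := by
  rw [hasSum_iff_tendsto_nat_of_nonneg (Set.indicator_nonneg fun n _ => ha0 n)]
  simp only [sum_range_indicator_greedySet]
  have hlower : Tendsto (fun n => c - ∑' k, a (k + n)) atTop (𝓝 c) := by
    simpa using (tendsto_sum_nat_add a).const_sub c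
  exact tendsto_of_tendsto_of_tendsto_of_le_of_le hlower tendsto_const_nhds
    (fun n => by linarith [le_greedySubsum_add_tsum ha hdom hc n]) (greedySubsum_le hc0)

end GreedySubsum

lemma pow_le_tsum_pow_tail {γ : ℝ} (hγ : 1 / 2 ≤ γ) (hγ1 : γ < 1) (n : ℕ) :
    γ ^ n ≤ ∑' k, γ ^ (k + (n + 1)) := by
  have h1γ : 0 < 1 - γ := by linarith
  simp only [pow_add, tsum_mul_right, tsum_geometric_of_lt_one (by linarith) hγ1]
  rw [pow_succ, ← div_eq_inv_mul, le_div_iff₀ h1γ]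
  nlinarith [pow_nonneg (show (0 : ℝ) ≤ γ by linarith) n]

section Fibers

variable {T : Type*} {f : ℕ → ℝ}

lemma sum_tsum_indicator_fiber [Fintype T] (hf : Summable f) (ξ : ℕ → T) :
    ∑ t, ∑' j, {j | ξ j = t}.indicator f j = ∑' j, f j := by
  classical
  rw [← Summable.tsum_finsetSum fun t _ => hf.indicator _]
  congr 1 with j
  simp [Set.indicator_apply, sum_ite_eq]

lemma hasSum_indicator_fiber_piecewise [DecidableEq T] {S : Set ℕ} [DecidablePred (· ∈ S)]
    {x y : ℝ} (hS : HasSum (S.indicator f) x) (hSc : HasSum (Sᶜ.indicator f) y) (ti tj t : T) :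
    HasSum ({j | (if j ∈ S then ti else tj) = t}.indicator f)
      ((if ti = t then x else 0) + (if tj = t then y else 0)) := by
  have hsplit : {j | (if j ∈ S then ti else tj) = t}.indicator f = fun j =>
      (if ti = t then S.indicator f j else 0) + (if tj = t then Sᶜ.indicator f j else 0) := by
    funext j
    by_cases hj : j ∈ S <;> simp [Set.indicator_apply, hj]
  rw [hsplit]
  refine HasSum.add ?_ ?_ <;> split_ifs <;> first | assumption | exact hasSum_zero

end Fibers

theorem stmt_2_general (γ : ℝ) (hγ : 1/2 ≤ γ) (hγ1 : γ < 1)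
    (T : Type*) [Fintype T] [DecidableEq T]
    (m : (ℕ → T) → T → ℝ)
    (hm : ∀ ξ t, m ξ t = ∑' j : ℕ, γ^j * (if ξ j = t then (1:ℝ) else 0))
    (v : T → T → ℝ)
    (hv : ∀ t t', v t t' = if t' = t then 1/(1-γ) else 0) :
    (∀ ξ : ℕ → T, (∀ t, 0 ≤ m ξ t) ∧ ∑ t, m ξ t = 1/(1-γ)) ∧
    (∀ ti tj : T, segment ℝ (v ti) (v tj) ⊆ Set.range m) := by
  have hγ0 : 0 ≤ γ := by linarith
  have hgeom : HasSum (γ ^ ·) (1 / (1 - γ)) := by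
    simpa [one_div] using hasSum_geometric_of_lt_one hγ0 hγ1
  have hm' : ∀ ξ t, m ξ t = ∑' j, {j | ξ j = t}.indicator (γ ^ ·) j := fun ξ t => by
    simp only [hm, mul_ite, mul_one, mul_zero, Set.indicator_apply, Set.mem_ofPred_eq]
  refine ⟨fun ξ => ⟨fun t => ?_, ?_⟩, ?_⟩
  · rw [hm']
    exact tsum_nonneg (Set.indicator_nonneg fun j _ => pow_nonneg hγ0 j)
  · simp only [hm', sum_tsum_indicator_fiber hgeom.summable, hgeom.tsum_eq]
  rintro ti tj x ⟨a, b, ha, hb, hab, rfl⟩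
  set S := greedySet (γ ^ ·) (a / (1 - γ))
  have hS : HasSum (S.indicator (γ ^ ·)) (a / (1 - γ)) :=
    hasSum_indicator_greedySet (fun n => pow_nonneg hγ0 n) hgeom.summable
      (pow_le_tsum_pow_tail hγ hγ1) (div_nonneg ha (by linarith))
      (by rw [hgeom.tsum_eq]; gcongr; linarith)
  have hSc : HasSum (Sᶜ.indicator (γ ^ ·)) (b / (1 - γ)) := by
    rw [Set.indicator_compl, ← sub_eq_of_eq_add' hab.symm, sub_div]
    exact hgeom.sub hS
  classical
  refine ⟨fun j => if j ∈ S then ti else tj, funext fun t => ?_⟩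
  rw [hm', (hasSum_indicator_fiber_piecewise hS hSc ti tj t).tsum_eq]
  simp [hv, eq_comm, mul_ite, div_eq_mul_inv]

/-- The image of the occupancy map `m` lies in the simplex
`{x | ∀ t, 0 ≤ x t ∧ ∑ t, x t = 1/(1-γ)}`, and contains every edge (segment between
two vertices) of that simplex, when γ ∈ [1/2, 1). -/
theorem stmt_2 (γ : ℝ) (hγ : 1/2 ≤ γ) (hγ1 : γ < 1)
    (T : Type*) [Fintype T] [Nonempty T] [DecidableEq T]
    (m : (ℕ → T) → T → ℝ)
    (hm : ∀ ξ t, m ξ t = ∑' j : ℕ, γ^j * (if ξ j = t then (1:ℝ) else 0))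
    (v : T → T → ℝ)
    (hv : ∀ t t', v t t' = if t' = t then 1/(1-γ) else 0) :
    (∀ ξ : ℕ → T, (∀ t, 0 ≤ m ξ t) ∧ ∑ t, m ξ t = 1/(1-γ)) ∧
    (∀ ti tj : T, segment ℝ (v ti) (v tj) ⊆ Set.range m) :=
  stmt_2_general γ hγ hγ1 T m hm v hv
end

section
/- Let γ ∈ [1/2, 1), let T be a finite set, let R₁, R₂ : T → ℝ, and define for ξ ∈ T^ℕ the returns G_i(ξ) = ∑_{j=0}^∞ γ^j · R_i(ξ_j) for i = 1,2. Suppose that for all ξ, ξ' ∈ T^ℕ, G₁(ξ) ≤ G₁(ξ') if and only if G₂(ξ) ≤ G₂(ξ'). Then there exist a ∈ ℝ and b > 0 such that G₁(ξ) = b · G₂(ξ) + a for all ξ ∈ T^ℕ, provided neither G₁ nor G₂ is constant; if either is constant then both are, and the conclusion holds with b = 1. -/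
/-!
Comparing constant trajectories shows that `R₁` and `R₂` order the states in the same way, so a
state `u` maximising `R₂` and a state `l` minimising it do the same for `R₁`. For `γ ≥ 1/2`
every number in `[0, 1/(1-γ)]` is a sum `∑ γ^j d_j` with digits `d_j ∈ {0, 1}` (greedy
expansion), so every value of `G₂` is also taken by a trajectory through `l` and `u` only.
On such trajectories both returns are affine in the same number `∑ γ^j d_j`, hence `G₁` is
an affine function of `G₂` there; since `G₁` is constant on the level sets of `G₂`, this holds
everywhere.
-/

open Set Filter Topology

lemma eq_iff_eq_of_le_iff_le {ι α β : Type*} [PartialOrder α] [PartialOrder β] {f : ι → α}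
    {g : ι → β} (h : ∀ x y, f x ≤ f y ↔ g x ≤ g y) (x y : ι) : f x = f y ↔ g x = g y := by
  simp only [le_antisymm_iff, h]

lemma exists_eq_add_of_forall_eq {α : Type*} {f g : α → ℝ} (hf : ∀ x y, f x = f y)
    (hg : ∀ x y, g x = g y) : ∃ a, ∀ x, f x = g x + a := by
  rcases isEmpty_or_nonempty α with hα | ⟨⟨x₀⟩⟩
  · exact ⟨0, isEmptyElim⟩
  · exact ⟨f x₀ - g x₀, fun x => by rw [hf x x₀, hg x x₀]; ring⟩

section Geometric

variable {γ : ℝ}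

lemma hasSum_pow_mul_const (hγ0 : 0 ≤ γ) (hγ1 : γ < 1) (c : ℝ) :
    HasSum (fun j : ℕ => γ ^ j * c) (c / (1 - γ)) := by
  simpa only [div_eq_mul_inv, mul_comm c] using (hasSum_geometric_of_lt_one hγ0 hγ1).mul_right c

lemma summable_pow_mul_of_mem_Icc (hγ0 : 0 ≤ γ) (hγ1 : γ < 1) {c : ℕ → ℝ} {m M : ℝ}
    (hc : ∀ j, c j ∈ Icc m M) : Summable fun j => γ ^ j * c j := by
  refine ((summable_geometric_of_lt_one hγ0 hγ1).mul_right (max |m| |M|)).of_norm_bounded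
    fun j => ?_
  rw [norm_mul, norm_pow, Real.norm_of_nonneg hγ0, Real.norm_eq_abs]
  exact mul_le_mul_of_nonneg_left (abs_le_max_abs_abs (hc j).1 (hc j).2) (by positivity)

lemma tsum_pow_mul_mem_Icc (hγ0 : 0 ≤ γ) (hγ1 : γ < 1) {c : ℕ → ℝ} {m M : ℝ}
    (hc : ∀ j, c j ∈ Icc m M) : ∑' j, γ ^ j * c j ∈ Icc (m / (1 - γ)) (M / (1 - γ)) := by
  have hs := (summable_pow_mul_of_mem_Icc hγ0 hγ1 hc).hasSum
  exact ⟨hasSum_le (fun j => by gcongr; exact (hc j).1) (hasSum_pow_mul_const hγ0 hγ1 m) hs,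
    hasSum_le (fun j => by gcongr; exact (hc j).2) hs (hasSum_pow_mul_const hγ0 hγ1 M)⟩

/-- Greedy expansion in base `1/γ`: take the digit `1` whenever the remainder is at least `1`.
The remainder stays in `[0, 1/(1-γ)]`, which needs `1 - γ ≤ γ` when the digit is `0`. -/
theorem exists_zero_one_hasSum_pow_mul (hγ : 1 / 2 ≤ γ) (hγ1 : γ < 1) {x : ℝ}
    (hx : x ∈ Icc 0 (1 - γ)⁻¹) :
    ∃ d : ℕ → ℝ, (∀ j, d j = 0 ∨ d j = 1) ∧ HasSum (fun j => γ ^ j * d j) x := by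
  have hγ0 : 0 < γ := by linarith
  have hγ' : 0 < 1 - γ := by linarith
  let digit : ℝ → ℝ := fun r => if 1 ≤ r then 1 else 0
  let step : ℝ → ℝ := fun r => (r - digit r) / γ
  have hstep : MapsTo step (Icc 0 (1 - γ)⁻¹) (Icc 0 (1 - γ)⁻¹) := by
    rintro r ⟨hr0, hr1⟩
    have hinv : (1 - γ)⁻¹ * (1 - γ) = 1 := inv_mul_cancel₀ hγ'.ne'
    have hinv0 : 0 ≤ (1 - γ)⁻¹ := by positivity
    refine ⟨div_nonneg ?_ hγ0.le, (div_le_iff₀ hγ0).2 ?_⟩ <;> unfold digit <;> split_ifs with h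
    all_goals nlinarith [mul_le_mul_of_nonneg_left (show 1 - γ ≤ γ by linarith) hinv0]
  let r : ℕ → ℝ := fun n => step^[n] x
  have hr : ∀ n, r n ∈ Icc 0 (1 - γ)⁻¹ := fun n => hstep.iterate n hx
  have hrec : ∀ n, r n = digit (r n) + γ * r (n + 1) := fun n => by
    rw [show r (n + 1) = step (r n) from Function.iterate_succ_apply' step n x,
      mul_div_cancel₀ _ hγ0.ne']
    ring
  have hpartial : ∀ n, ∑ j ∈ Finset.range n, γ ^ j * digit (r j) = x - γ ^ n * r n := by
    intro n
    induction n with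
    | zero => simp [r]
    | succ n ih => rw [Finset.sum_range_succ, ih]; linear_combination -γ ^ n * hrec n
  have hdigit : ∀ r, digit r = 0 ∨ digit r = 1 := fun r => by unfold digit; split_ifs <;> simp
  refine ⟨fun j => digit (r j), fun j => hdigit _, ?_⟩
  refine (hasSum_iff_tendsto_nat_of_nonneg (fun j => ?_) x).2 ?_
  · show 0 ≤ γ ^ j * digit (r j)
    rcases hdigit (r j) with h | h <;> rw [h] <;> positivity
  · simp only [hpartial]
    have htail : Tendsto (fun n => γ ^ n * r n) atTop (𝓝 0) := by
      refine squeeze_zero (fun n => mul_nonneg (by positivity) (hr n).1)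
        (fun n => mul_le_mul_of_nonneg_left (hr n).2 (by positivity)) ?_
      simpa using (tendsto_pow_atTop_nhds_zero_of_lt_one hγ0.le hγ1).mul_const (1 - γ)⁻¹
    simpa using tendsto_const_nhds.sub htail

end Geometric

section DiscountedReturn

variable {T : Type*} {γ : ℝ}

noncomputable def discountedReturn (γ : ℝ) (R : T → ℝ) (ξ : ℕ → T) : ℝ :=
  ∑' j, γ ^ j * R (ξ j)

lemma discountedReturn_const (hγ0 : 0 ≤ γ) (hγ1 : γ < 1) (R : T → ℝ) (t : T) :
    discountedReturn γ R (fun _ => t) = R t / (1 - γ) :=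
  (hasSum_pow_mul_const hγ0 hγ1 _).tsum_eq

lemma discountedReturn_mem_Icc (hγ0 : 0 ≤ γ) (hγ1 : γ < 1) {R : T → ℝ} {m M : ℝ}
    (hR : ∀ t, R t ∈ Icc m M) (ξ : ℕ → T) :
    discountedReturn γ R ξ ∈ Icc (m / (1 - γ)) (M / (1 - γ)) :=
  tsum_pow_mul_mem_Icc hγ0 hγ1 fun j => hR (ξ j)

lemma exists_discountedReturn_eq_of_mem_Icc (hγ : 1 / 2 ≤ γ) (hγ1 : γ < 1) {x : ℝ}
    (hx : x ∈ Icc 0 (1 - γ)⁻¹) (t₀ t₁ : T) :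
    ∃ ξ : ℕ → T, ∀ R : T → ℝ,
      discountedReturn γ R ξ = R t₀ / (1 - γ) + x * (R t₁ - R t₀) := by
  obtain ⟨d, hd, hdx⟩ := exists_zero_one_hasSum_pow_mul hγ hγ1 hx
  refine ⟨fun j => if d j = 1 then t₁ else t₀, fun R => ?_⟩
  have hR : ∀ j, γ ^ j * R (if d j = 1 then t₁ else t₀)
      = γ ^ j * R t₀ + γ ^ j * d j * (R t₁ - R t₀) := fun j => by
    rcases hd j with h | h <;> simp [h, mul_sub]
  exact (((hasSum_pow_mul_const (by linarith) hγ1 _).add (hdx.mul_right _)).congr_fun hR).tsum_eq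

lemma exists_two_state_discountedReturn_eq (hγ : 1 / 2 ≤ γ) (hγ1 : γ < 1) {R₀ : T → ℝ}
    {l u : T} (hl : ∀ t, R₀ l ≤ R₀ t) (hu : ∀ t, R₀ t ≤ R₀ u) (hlu : R₀ l < R₀ u)
    (ξ : ℕ → T) : ∃ ξ' : ℕ → T, ∀ R : T → ℝ, discountedReturn γ R ξ' = R l / (1 - γ) +
      (discountedReturn γ R₀ ξ - R₀ l / (1 - γ)) / (R₀ u - R₀ l) * (R u - R l) := by
  have hΔ : 0 < R₀ u - R₀ l := sub_pos.2 hlu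
  obtain ⟨hξl, hξu⟩ :=
    discountedReturn_mem_Icc (γ := γ) (by linarith) hγ1 (fun t => ⟨hl t, hu t⟩) ξ
  refine exists_discountedReturn_eq_of_mem_Icc hγ hγ1
    ⟨div_nonneg (sub_nonneg.2 hξl) hΔ.le, ?_⟩ l u
  rw [div_le_iff₀ hΔ, inv_mul_eq_div, sub_div]
  linarith

lemma le_iff_le_of_discountedReturn_le_iff (hγ0 : 0 ≤ γ) (hγ1 : γ < 1) {R₁ R₂ : T → ℝ}
    (hord : ∀ ξ ξ', discountedReturn γ R₁ ξ ≤ discountedReturn γ R₁ ξ' ↔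
      discountedReturn γ R₂ ξ ≤ discountedReturn γ R₂ ξ') (t t' : T) :
    R₁ t ≤ R₁ t' ↔ R₂ t ≤ R₂ t' := by
  simpa only [discountedReturn_const hγ0 hγ1, div_le_div_iff_of_pos_right (sub_pos.2 hγ1)]
    using hord (fun _ => t) (fun _ => t')

theorem exists_pos_affine_of_discountedReturn_le_iff [Finite T] (hγ : 1 / 2 ≤ γ) (hγ1 : γ < 1)
    {R₁ R₂ : T → ℝ}
    (hord : ∀ ξ ξ', discountedReturn γ R₁ ξ ≤ discountedReturn γ R₁ ξ' ↔
      discountedReturn γ R₂ ξ ≤ discountedReturn γ R₂ ξ')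
    (hR₂ : ¬ ∀ ξ ξ', discountedReturn γ R₂ ξ = discountedReturn γ R₂ ξ') :
    ∃ a b : ℝ, 0 < b ∧ ∀ ξ, discountedReturn γ R₁ ξ = b * discountedReturn γ R₂ ξ + a := by
  have hγ0 : 0 ≤ γ := by linarith
  obtain ⟨ξ₀, -⟩ := not_forall.1 hR₂
  have : Nonempty T := ⟨ξ₀ 0⟩
  obtain ⟨u, hu⟩ := Finite.exists_max R₂
  obtain ⟨l, hl⟩ := Finite.exists_min R₂
  have hlu₂ : R₂ l < R₂ u := by
    refine (hl u).lt_of_ne fun h => hR₂ fun ξ ξ' => ?_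
    have hbounds := discountedReturn_mem_Icc hγ0 hγ1 fun t => ⟨hl t, hu t⟩
    obtain ⟨hξl, hξu⟩ := hbounds ξ
    obtain ⟨hξ'l, hξ'u⟩ := hbounds ξ'
    rw [← h] at hξu hξ'u
    linarith
  have hlu₁ : R₁ l < R₁ u := by
    simpa only [lt_iff_not_ge, le_iff_le_of_discountedReturn_le_iff hγ0 hγ1 hord] using hlu₂
  have hΔ₂ : R₂ u - R₂ l ≠ 0 := (sub_pos.2 hlu₂).ne'
  refine ⟨R₁ l / (1 - γ) - (R₁ u - R₁ l) / (R₂ u - R₂ l) * (R₂ l / (1 - γ)),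
    (R₁ u - R₁ l) / (R₂ u - R₂ l), div_pos (sub_pos.2 hlu₁) (sub_pos.2 hlu₂), fun ξ => ?_⟩
  obtain ⟨ξ', hξ'⟩ := exists_two_state_discountedReturn_eq hγ hγ1 hl hu hlu₂ ξ
  have h₂ : discountedReturn γ R₂ ξ = discountedReturn γ R₂ ξ' := by
    rw [hξ', div_mul_cancel₀ _ hΔ₂]
    ring
  rw [(eq_iff_eq_of_le_iff_le hord ξ ξ').2 h₂, h₂, hξ', hξ']
  field_simp
  ring

end DiscountedReturn

/-- Theorem 2: if the discounted returns G₁, G₂ of two Markovian rewards induce the same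
order on all trajectories and γ ≥ 1/2, then G₁ is a positive affine transformation of G₂
(when neither is constant); and if either is constant, both are and G₁ = 1·G₂ + a. -/
theorem stmt_3 (γ : ℝ) (hγ : 1/2 ≤ γ) (hγ1 : γ < 1)
    (T : Type*) [Fintype T]
    (R₁ R₂ : T → ℝ) (G₁ G₂ : (ℕ → T) → ℝ)
    (hG₁ : ∀ ξ, G₁ ξ = ∑' j : ℕ, γ^j * R₁ (ξ j))
    (hG₂ : ∀ ξ, G₂ ξ = ∑' j : ℕ, γ^j * R₂ (ξ j))
    (hord : ∀ ξ ξ' : ℕ → T, G₁ ξ ≤ G₁ ξ' ↔ G₂ ξ ≤ G₂ ξ') :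
    ((¬ (∀ ξ ξ' : ℕ → T, G₁ ξ = G₁ ξ') ∧ ¬ (∀ ξ ξ' : ℕ → T, G₂ ξ = G₂ ξ')) →
      ∃ a b : ℝ, 0 < b ∧ ∀ ξ, G₁ ξ = b * G₂ ξ + a) ∧
    (((∀ ξ ξ' : ℕ → T, G₁ ξ = G₁ ξ') ∨ (∀ ξ ξ' : ℕ → T, G₂ ξ = G₂ ξ')) →
      (∀ ξ ξ' : ℕ → T, G₁ ξ = G₁ ξ') ∧ (∀ ξ ξ' : ℕ → T, G₂ ξ = G₂ ξ') ∧
      ∃ a : ℝ, ∀ ξ, G₁ ξ = 1 * G₂ ξ + a) := by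
  obtain rfl : G₁ = discountedReturn γ R₁ := funext hG₁
  obtain rfl : G₂ = discountedReturn γ R₂ := funext hG₂
  have hconst := forall₂_congr (eq_iff_eq_of_le_iff_le hord)
  refine ⟨fun ⟨_, h₂⟩ => exists_pos_affine_of_discountedReturn_le_iff hγ hγ1 hord h₂, fun h => ?_⟩
  have h₁ := h.elim id hconst.2
  have h₂ := h.elim hconst.1 id
  obtain ⟨a, ha⟩ := exists_eq_add_of_forall_eq h₁ h₂
  exact ⟨h₁, h₂, a, by simpa only [one_mul] using ha⟩
end

section
/- Let V be a finite-dimensional real vector space, S an affine subspace of V, X ⊆ S a subset that is open in S (in the subspace topology), f : V → ℝ a linear functional, and M : V → ℝ^k a linear map. Suppose that for all x₁, x₂ ∈ X, M x₁ = M x₂ implies f x₁ = f x₂. Then for all x₁, x₂ ∈ S, M x₁ = M x₂ implies f x₁ = f x₂. -/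
/-- If a linear functional `f` is constant on fibers of a linear map `M` over a set `X`
that is nonempty and open in an affine subspace `S` containing it, then `f` is constant
on fibers of `M` over all of `S`. -/
theorem stmt_7 {V : Type*} [NormedAddCommGroup V] [NormedSpace ℝ V]
    [FiniteDimensional ℝ V] {k : ℕ}
    (S : AffineSubspace ℝ V) (X : Set V) (hXS : X ⊆ (S : Set V)) (hXne : X.Nonempty)
    (hXopen : IsOpen {x : S | (x : V) ∈ X})
    (f : V →ₗ[ℝ] ℝ) (M : V →ₗ[ℝ] (Fin k → ℝ))
    (h : ∀ x₁ ∈ X, ∀ x₂ ∈ X, M x₁ = M x₂ → f x₁ = f x₂) :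
    ∀ x₁ ∈ (S : Set V), ∀ x₂ ∈ (S : Set V), M x₁ = M x₂ → f x₁ = f x₂ := by
  intro x₁ hx₁ x₂ hx₂ hM
  obtain ⟨x₀, hx₀⟩ := hXne
  set d : V := x₂ - x₁ with hd
  have hdmem : d ∈ S.direction := by
    simpa [hd] using AffineSubspace.vsub_mem_direction hx₂ hx₁
  have hMd : M d = 0 := by simp [hd, map_sub, hM]
  -- membership of the line points
  have hmem : ∀ t : ℝ, t • d + x₀ ∈ S := fun t => by
    have := AffineSubspace.vadd_mem_of_mem_direction (S.direction.smul_mem t hdmem)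
      (hXS hx₀)
    simpa [vadd_eq_add] using this
  -- the continuous path into S
  let g : ℝ → S := fun t => ⟨t • d + x₀, hmem t⟩
  have hgcont : Continuous g := by
    apply Continuous.subtype_mk
    exact (continuous_id.smul continuous_const).add continuous_const
  have hopen : IsOpen (g ⁻¹' {x : S | (x : V) ∈ X}) := hXopen.preimage hgcont
  have h0 : (0 : ℝ) ∈ g ⁻¹' {x : S | (x : V) ∈ X} := by
    simp [g, hx₀]
  obtain ⟨ε, hε, hball⟩ := Metric.isOpen_iff.mp hopen 0 h0
  have htmem : (ε / 2) • d + x₀ ∈ X := by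
    have : (ε / 2) ∈ Metric.ball (0 : ℝ) ε := by
      rw [Metric.mem_ball, Real.dist_eq, sub_zero, abs_of_pos (half_pos hε)]
      linarith
    exact hball this
  have hMeq : M ((ε / 2) • d + x₀) = M x₀ := by
    simp [map_add, map_smul, hMd]
  have hfeq : f ((ε / 2) • d + x₀) = f x₀ := h _ htmem _ hx₀ hMeq
  have : (ε / 2) * f d = 0 := by
    have := hfeq
    simp [map_add, map_smul, smul_eq_mul] at this
    rcases this with h' | h'
    · linarith
    · simp [h']
  have hfd : f d = 0 := by
    rcases mul_eq_zero.mp this with h' | h'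
    · exact absurd h' (by positivity)
    · exact h'
  have : f x₂ - f x₁ = 0 := by simpa [hd, map_sub] using hfd
  linarith
end

section
/- There are no w₁, w₂ ∈ ℝ and strictly increasing f : ℝ → ℝ such that f(w₁x + w₂y) = min(x,y) for all (x,y) in an open subset U of ℝ² containing points (x,y) with x < y and points with y < x. -/
/-- The MaxMin obstruction: min(x,y) on an open set meeting both sides of the diagonal is
not a strictly monotone function of any linear functional w₁x + w₂y. -/
theorem stmt_9 :
    ¬ ∃ (w₁ w₂ : ℝ) (f : ℝ → ℝ) (U : Set (ℝ × ℝ)),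
      IsOpen U ∧ (∃ p ∈ U, p.1 < p.2) ∧ (∃ p ∈ U, p.2 < p.1) ∧
      StrictMono f ∧ ∀ p ∈ U, f (w₁ * p.1 + w₂ * p.2) = min p.1 p.2 := by
  rintro ⟨w₁, w₂, f, U, hU, ⟨p, hp, hplt⟩, ⟨q, hq, hqlt⟩, hf, hfeq⟩
  have hV₁ : IsOpen (U ∩ {r : ℝ × ℝ | r.1 < r.2}) :=
    hU.inter (isOpen_lt continuous_fst continuous_snd)
  have hV₂ : IsOpen (U ∩ {r : ℝ × ℝ | r.2 < r.1}) :=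
    hU.inter (isOpen_lt continuous_snd continuous_fst)
  obtain ⟨ε₁, hε₁, hball₁⟩ := Metric.isOpen_iff.mp hV₁ p ⟨hp, hplt⟩
  obtain ⟨ε₂, hε₂, hball₂⟩ := Metric.isOpen_iff.mp hV₂ q ⟨hq, hqlt⟩
  -- perturbed points
  have mem₁ : ((p.1, p.2 + ε₁/2) : ℝ × ℝ) ∈ U ∩ {r : ℝ × ℝ | r.1 < r.2} := by
    apply hball₁
    simp only [Metric.mem_ball, Prod.dist_eq, Real.dist_eq]
    rw [show p.1 - p.1 = 0 by ring, show p.2 + ε₁/2 - p.2 = ε₁/2 by ring,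
      abs_zero, abs_of_pos (by linarith)]
    simp; linarith
  have mem₁' : ((p.1 + ε₁/2, p.2) : ℝ × ℝ) ∈ U ∩ {r : ℝ × ℝ | r.1 < r.2} := by
    apply hball₁
    simp only [Metric.mem_ball, Prod.dist_eq, Real.dist_eq]
    rw [show p.2 - p.2 = 0 by ring, show p.1 + ε₁/2 - p.1 = ε₁/2 by ring,
      abs_zero, abs_of_pos (by linarith)]
    simp; linarith
  have mem₂ : ((q.1 + ε₂/2, q.2) : ℝ × ℝ) ∈ U ∩ {r : ℝ × ℝ | r.2 < r.1} := by
    apply hball₂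
    simp only [Metric.mem_ball, Prod.dist_eq, Real.dist_eq]
    rw [show q.2 - q.2 = 0 by ring, show q.1 + ε₂/2 - q.1 = ε₂/2 by ring,
      abs_zero, abs_of_pos (by linarith)]
    simp; linarith
  -- values
  have h0 : f (w₁ * p.1 + w₂ * p.2) = p.1 := by
    rw [hfeq p hp, min_eq_left hplt.le]
  have h1 : f (w₁ * p.1 + w₂ * (p.2 + ε₁/2)) = p.1 := by
    have hlt : p.1 < p.2 + ε₁/2 := mem₁.2
    have := hfeq _ mem₁.1
    simpa [min_eq_left hlt.le] using this
  have h2 : f (w₁ * (p.1 + ε₁/2) + w₂ * p.2) = p.1 + ε₁/2 := by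
    have hlt : p.1 + ε₁/2 < p.2 := mem₁'.2
    have := hfeq _ mem₁'.1
    simpa [min_eq_left hlt.le] using this
  have h3 : f (w₁ * q.1 + w₂ * q.2) = q.2 := by
    rw [hfeq q hq, min_eq_right hqlt.le]
  have h4 : f (w₁ * (q.1 + ε₂/2) + w₂ * q.2) = q.2 := by
    have hlt : q.2 < q.1 + ε₂/2 := mem₂.2
    have := hfeq _ mem₂.1
    simpa [min_eq_right hlt.le] using this
  -- w₂ = 0
  have e₂ : w₁ * p.1 + w₂ * (p.2 + ε₁/2) = w₁ * p.1 + w₂ * p.2 :=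
    hf.injective (h1.trans h0.symm)
  have hw₂ : w₂ = 0 := by
    have h : w₂ * (ε₁/2) = 0 := by linear_combination e₂
    rcases mul_eq_zero.mp h with h' | h'
    · exact h'
    · exfalso; linarith
  -- w₁ = 0
  have e₁ : w₁ * (q.1 + ε₂/2) + w₂ * q.2 = w₁ * q.1 + w₂ * q.2 :=
    hf.injective (h4.trans h3.symm)
  have hw₁ : w₁ = 0 := by
    have h : w₁ * (ε₂/2) = 0 := by linear_combination e₁
    rcases mul_eq_zero.mp h with h' | h'
    · exact h'
    · exfalso; linarith
  -- contradiction
  rw [hw₁, hw₂] at h0 h2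
  simp only [zero_mul, add_zero, zero_add] at h0 h2
  rw [h0] at h2
  linarith
end

section
/- There is no pair of weights w₁, w₂ ∈ ℝ and strictly increasing function f : ℝ → ℝ such that f(w₁ x + w₂ y) = 1_{x ≥ c₁} + 1_{y ≥ c₂} for all (x, y) in an open connected subset U ⊆ ℝ² that contains points in all four regions {x < c₁, y < c₂}, {x ≥ c₁, y < c₂}, {x < c₁, y ≥ c₂}, {x ≥ c₁, y ≥ c₂}. -/
/-- The MaxSat obstruction: the threshold-count 1_{x ≥ c₁} + 1_{y ≥ c₂} on an open
connected set meeting all four threshold regions is not a strictly monotone function of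
any linear functional w₁x + w₂y. -/
theorem stmt_10 (c₁ c₂ : ℝ) :
    ¬ ∃ (w₁ w₂ : ℝ) (f : ℝ → ℝ) (U : Set (ℝ × ℝ)),
      IsOpen U ∧ IsConnected U ∧
      (∃ p ∈ U, p.1 < c₁ ∧ p.2 < c₂) ∧
      (∃ p ∈ U, c₁ ≤ p.1 ∧ p.2 < c₂) ∧
      (∃ p ∈ U, p.1 < c₁ ∧ c₂ ≤ p.2) ∧
      (∃ p ∈ U, c₁ ≤ p.1 ∧ c₂ ≤ p.2) ∧
      StrictMono f ∧
      ∀ p ∈ U, f (w₁ * p.1 + w₂ * p.2) =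
        (if c₁ ≤ p.1 then (1:ℝ) else 0) + (if c₂ ≤ p.2 then (1:ℝ) else 0) := by
  rintro ⟨w₁, w₂, f, U, hU, -, ⟨p00, hp00, h00x, h00y⟩, ⟨p10, hp10, h10x, h10y⟩,
    ⟨p01, hp01, h01x, h01y⟩, ⟨p11, hp11, h11x, h11y⟩, hf, heq⟩
  have hinj : Function.Injective f := hf.injective
  -- w₁ = 0
  have hw₁ : w₁ = 0 := by
    obtain ⟨ε, hε, hball⟩ := Metric.isOpen_iff.mp hU p10 hp10
    set q : ℝ × ℝ := (p10.1 + ε / 2, p10.2) with hq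
    have hqU : q ∈ U := by
      apply hball
      rw [Metric.mem_ball, Prod.dist_eq]
      simp [hq, Real.dist_eq, abs_of_pos (by linarith : (0:ℝ) < ε / 2), abs_of_pos hε]
      exact hε
    have h1 := heq p10 hp10
    have h2 := heq q hqU
    rw [if_pos h10x, if_neg (not_le.mpr h10y)] at h1
    rw [if_pos (by simp only [hq]; linarith : c₁ ≤ q.1),
        if_neg (not_le.mpr (by exact h10y : q.2 < c₂))] at h2
    have := hinj (h2.trans h1.symm)
    simp only [hq] at this
    nlinarith [this]
  -- w₂ = 0
  have hw₂ : w₂ = 0 := by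
    obtain ⟨ε, hε, hball⟩ := Metric.isOpen_iff.mp hU p01 hp01
    set q : ℝ × ℝ := (p01.1, p01.2 + ε / 2) with hq
    have hqU : q ∈ U := by
      apply hball
      rw [Metric.mem_ball, Prod.dist_eq]
      simp [hq, Real.dist_eq, abs_of_pos (by linarith : (0:ℝ) < ε / 2), abs_of_pos hε]
      exact hε
    have h1 := heq p01 hp01
    have h2 := heq q hqU
    rw [if_neg (not_le.mpr h01x), if_pos h01y] at h1
    rw [if_neg (not_le.mpr (by exact h01x : q.1 < c₁)),
        if_pos (by simp only [hq]; linarith : c₂ ≤ q.2)] at h2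
    have := hinj (h2.trans h1.symm)
    simp only [hq] at this
    nlinarith [this]
  have h0 := heq p00 hp00
  have h2 := heq p11 hp11
  rw [if_neg (not_le.mpr h00x), if_neg (not_le.mpr h00y)] at h0
  rw [if_pos h11x, if_pos h11y] at h2
  rw [hw₁, hw₂] at h0 h2
  simp only [zero_mul, add_zero] at h0 h2
  rw [h0] at h2
  norm_num at h2
end

section
/- Let Π be a set, c ∈ ℝ, and J₁, J₂ : Π → ℝ with Π nonempty and inf over Π of J₂ attained. Define U : Π → ℝ by U(π) = J₁(π) if J₁(π) < c, and U(π) = J₂(π) - min_{π'} J₂(π') + c otherwise. Then U represents the ConSat order: for all π₁, π₂, U(π₁) < U(π₂) holds if and only if either (J₁(π₁) < c and J₁(π₁) < J₁(π₂)) or (J₁(π₁) ≥ c and J₁(π₂) ≥ c and J₂(π₁) < J₂(π₂)). -/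
/-- The function U(π) = J₁(π) if J₁(π) < c, else J₂(π) - min J₂ + c, represents the
ConSat order. -/
theorem stmt_15 {Pol : Type*} [Nonempty Pol] (c : ℝ) (J₁ J₂ : Pol → ℝ)
    (p₀ : Pol) (hmin : ∀ p, J₂ p₀ ≤ J₂ p)
    (U : Pol → ℝ)
    (hU : ∀ p, U p = if J₁ p < c then J₁ p else J₂ p - J₂ p₀ + c) :
    ∀ p₁ p₂ : Pol, U p₁ < U p₂ ↔
      ((J₁ p₁ < c ∧ J₁ p₁ < J₁ p₂) ∨ (c ≤ J₁ p₁ ∧ c ≤ J₁ p₂ ∧ J₂ p₁ < J₂ p₂)) := by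
  intro p₁ p₂
  rw [hU p₁, hU p₂]
  rcases lt_or_ge (J₁ p₁) c with h1 | h1 <;> rcases lt_or_ge (J₁ p₂) c with h2 | h2
  · rw [if_pos h1, if_pos h2]
    constructor
    · intro h; exact Or.inl ⟨h1, h⟩
    · rintro (⟨_, h⟩ | ⟨h, _⟩); exact h; linarith
  · rw [if_pos h1, if_neg (not_lt.mpr h2)]
    have := hmin p₂
    constructor
    · intro _; exact Or.inl ⟨h1, by linarith⟩
    · intro _; linarith
  · rw [if_neg (not_lt.mpr h1), if_pos h2]
    have := hmin p₁
    constructor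
    · intro h; exact absurd h (by linarith)
    · rintro (⟨h, _⟩ | ⟨h, _⟩) <;> linarith
  · rw [if_neg (not_lt.mpr h1), if_neg (not_lt.mpr h2)]
    constructor
    · intro h; exact Or.inr ⟨h1, h2, by linarith⟩
    · rintro (⟨h, _⟩ | ⟨_, _, h⟩); linarith; linarith
end
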